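/- arXiv:1308.1804 — 2 statements merged into one kernel-verified Lean document; each statement's English description precedes it below -/
import Mathlib

section
/- Let T be a triangulated category with small coproducts which has a compact generator. Then every compact object Z of T admits a Brown–Comenetz dual, i.e., an object Z^+ of T together with a natural isomorphism Hom_T(−, Z^+) ≅ Hom_ℤ(Hom_T(Z,−), ℚ/ℤ) of functors T^op → Ab. -/
/-!
Statement 3: Let `T` be a triangulated category with small coproducts and a compact generator.
Then every compact object `Z` of `T` admits a Brown–Comenetz dual: an object `Z⁺` together with
a natural isomorphism `Hom_T(-, Z⁺) ≅ Hom_ℤ(Hom_T(Z, -), ℚ/ℤ)` of functors `Tᵒᵖ ⥤ Ab`.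
-/

universe w v u

open CategoryTheory Category Limits Pretriangulated

namespace PaperStmt

variable {T : Type u} [Category.{v} T]

/-- An object `Z` of a preadditive category is compact if for every small family `(X i)`
having a coproduct, the canonical map `⨁ᵢ Hom(Z, X i) → Hom(Z, ∐ X)` is bijective. -/
def IsCompactObj [Preadditive T] (Z : T) : Prop :=
  ∀ ⦃ι : Type v⦄ (X : ι → T) [HasCoproduct X],
    letI := Classical.decEq ι
    Function.Bijective
      (DFinsupp.sumAddHom (β := fun i => (Z ⟶ X i))
        (fun i => Preadditive.rightComp Z (Sigma.ι X i)))

/-- `Z` is a generator of a triangulated category in the triangulated sense: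
every nonzero object receives a nonzero morphism from some shift of `Z`. -/
def IsTriangulatedGen [Preadditive T] [HasShift T ℤ] (Z : T) : Prop :=
  ∀ (X : T), ¬ IsZero X → ∃ (i : ℤ) (f : Z⟦i⟧ ⟶ X), f ≠ 0

end PaperStmt

open PaperStmt

/-- `ℚ/ℤ`, an injective cogenerator of the category of abelian groups, lifted to
the relevant universe. -/
noncomputable abbrev QmodZ : AddCommGrpCat.{v} :=
  AddCommGrpCat.of (ULift.{v} (AddCircle (1 : ℚ)))

/-!
Brown representability. Let `G` be a compact generator and `H : Tᵒᵖ ⥤ Ab` an additive functor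
that is cohomological and turns coproducts into products. Build a tower `X₀ → X₁ → ⋯` with
classes `uₙ ∈ H(Xₙ)`: `X₀` is a coproduct of shifts of `G` realising every element of every
`H(G⟦k⟧)`, and `Xₙ₊₁` is the cone of a coproduct of maps `G⟦k⟧ → Xₙ` killing the kernel of
`Hom(G⟦k⟧, Xₙ) → H(G⟦k⟧)`. The classes glue to `u ∈ H(X)` on the homotopy colimit `X`, the cone
of `1 - shift` on `∐ Xₙ`, and since every `G⟦k⟧` is compact, maps `G⟦k⟧ → X` factor through
a finite stage; hence `Hom(G⟦k⟧, X) → H(G⟦k⟧)` is bijective. By the five lemma the objects `Y`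
with `Hom(Y⟦k⟧, X) ≅ H(Y⟦k⟧)` for all `k` are closed under coproducts and cones, so they contain
everything built from `G`. Running the construction for `H = Hom(-, Y)` shows that every `Y` is
isomorphic to such an object, because `G` is a generator.

The Brown–Comenetz functor `Hom(Hom(Z, -), ℚ/ℤ)` satisfies these hypotheses: it is cohomological
because `ℚ/ℤ` is injective, and it turns coproducts into products because `Z` is compact.
-/

open Opposite

instance ULift.divisibleBy {A α : Type*} [AddMonoid A] [SMul α A] [Zero α] [DivisibleBy A α] :
    DivisibleBy (ULift A) α where
  div a n := ⟨DivisibleBy.div a.down n⟩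
  div_zero a := ULift.ext _ _ (DivisibleBy.div_zero a.down)
  div_cancel a hn := ULift.ext _ _ (DivisibleBy.div_cancel a.down hn)

theorem AddMonoidHom.exists_comp_eq_of_exact {A B C Q : Type*} [AddCommGroup A]
    [AddCommGroup B] [AddCommGroup C] [AddCommGroup Q] [DivisibleBy Q ℤ] {f : A →+ B}
    {g : B →+ C} (hfg : Function.Exact f g) (ψ : B →+ Q) (hψ : ψ.comp f = 0) :
    ∃ φ : C →+ Q, φ.comp g = ψ := by
  have hker : g.rangeRestrict.ker ≤ ψ.ker := fun b hb => by
    obtain ⟨a, rfl⟩ := (hfg b).1 (congrArg Subtype.val hb)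
    exact DFunLike.congr_fun hψ a
  obtain ⟨φ, hφ⟩ := (Module.Baer.of_divisible Q).extension_property_addMonoidHom
    g.range.subtype Subtype.val_injective (g.rangeRestrict.liftOfSurjective
      g.rangeRestrict_surjective ⟨ψ, hker⟩)
  refine ⟨φ, AddMonoidHom.ext fun b => ?_⟩
  simpa using DFunLike.congr_fun hφ (g.rangeRestrict b)

theorem Function.Exact.of_neg_left {M N P : Type*} [AddGroup M] [AddCommGroup N] [Zero P]
    {f : M →+ N} {g : N → P} (h : Function.Exact ⇑(-f) g) : Function.Exact f g :=
  fun y => (h y).trans ⟨fun ⟨x, hx⟩ => ⟨-x, by simpa using hx⟩, fun ⟨x, hx⟩ => ⟨-x, by simp [hx]⟩⟩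

namespace PaperStmt

section Compact

variable {C : Type*} [Category.{v} C] [Preadditive C]

-- Literally the map of `IsCompactObj`, so that `hP X` is bijectivity of `sigmaHomSum P X`.
noncomputable def sigmaHomSum (P : C) {ι : Type v} (X : ι → C) [HasCoproduct X] :
    (Π₀ i, (P ⟶ X i)) →+ (P ⟶ ∐ X) :=
  letI := Classical.decEq ι
  DFinsupp.sumAddHom fun i => Preadditive.rightComp P (Sigma.ι X i)

@[simp]
lemma sigmaHomSum_single (P : C) {ι : Type v} [DecidableEq ι] (X : ι → C) [HasCoproduct X]
    (i : ι) (x : P ⟶ X i) : sigmaHomSum P X (DFinsupp.single i x) = x ≫ Sigma.ι X i := by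
  unfold sigmaHomSum
  convert DFinsupp.sumAddHom_single (fun i => Preadditive.rightComp P (Sigma.ι X i)) i x
  rfl

noncomputable def IsCompactObj.sigmaHomEquiv {P : C} (hP : IsCompactObj P) {ι : Type v}
    (X : ι → C) [HasCoproduct X] : (Π₀ i, (P ⟶ X i)) ≃+ (P ⟶ ∐ X) :=
  AddEquiv.ofBijective (sigmaHomSum P X) (hP X)

@[simp]
lemma IsCompactObj.sigmaHomEquiv_symm_comp_ι {P : C} (hP : IsCompactObj P) {ι : Type v}
    [DecidableEq ι] (X : ι → C) [HasCoproduct X] (i : ι) (x : P ⟶ X i) :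
    (hP.sigmaHomEquiv X).symm (x ≫ Sigma.ι X i) = DFinsupp.single i x :=
  (AddEquiv.symm_apply_eq _).2 (sigmaHomSum_single P X i x).symm

theorem IsCompactObj.of_adjunction {D : Type*} [Category.{v} D] [Preadditive D]
    [HasCoproducts.{v} C] {F : C ⥤ D} {R : D ⥤ C} (adj : F ⊣ R) [F.Additive]
    [PreservesColimitsOfSize.{v, v} R] {P : C} (hP : IsCompactObj P) :
    IsCompactObj (F.obj P) := by
  intro ι X _
  classical
  let e := PreservesCoproduct.iso R X
  have hsq : sigmaHomSum (F.obj P) X = ((adj.homAddEquiv P (∐ X)).symm.toAddMonoidHom.comp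
      (Preadditive.rightComp P e.inv)).comp ((sigmaHomSum P (fun i => R.obj (X i))).comp
        (DFinsupp.mapRange.addEquiv fun i => adj.homAddEquiv P (X i)).toAddMonoidHom) := by
    refine DFinsupp.addHom_ext fun i x => ?_
    simp only [sigmaHomSum_single, AddEquiv.toAddMonoidHom_eq_coe, Preadditive.rightComp,
      PreservesCoproduct.inv_hom, AddMonoidHom.coe_comp, AddMonoidHom.coe_coe,
      AddMonoidHom.mk'_apply, Function.comp_apply, DFinsupp.mapRange.addEquiv_apply,
      Adjunction.homAddEquiv_apply, DFinsupp.mapRange_single, assoc, ι_comp_sigmaComparison,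
      Adjunction.homAddEquiv_symm_apply, e]
    rw [← adj.homEquiv_naturality_right, Equiv.symm_apply_apply]
  change Function.Bijective (sigmaHomSum (F.obj P) X)
  rw [hsq]
  have he : Function.Bijective (Preadditive.rightComp P e.inv) :=
    ⟨fun _ _ h => by simpa [Preadditive.rightComp] using congrArg (· ≫ e.hom) h,
      fun g => ⟨g ≫ e.hom, by simp [Preadditive.rightComp]⟩⟩
  exact (adj.homAddEquiv _ _).symm.bijective.comp
    (he.comp ((hP _).comp (DFinsupp.mapRange.addEquiv _).bijective))

theorem IsCompactObj.shift {T : Type*} [Category.{v} T] [Preadditive T] [HasShift T ℤ]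
    [∀ n : ℤ, (shiftFunctor T n).Additive] [HasCoproducts.{v} T] {P : T}
    (hP : IsCompactObj P) (k : ℤ) : IsCompactObj (P⟦k⟧) :=
  letI : (shiftEquiv' T k (-k) (add_neg_cancel k)).functor.Additive :=
    inferInstanceAs (shiftFunctor T k).Additive
  hP.of_adjunction (shiftEquiv' T k (-k) (add_neg_cancel k)).toAdjunction

end Compact

section Representability

variable {T : Type u} [Category.{v} T] [Preadditive T] (H : Tᵒᵖ ⥤ AddCommGrpCat.{v}) [H.Additive]

def classHom {X : T} (u : H.obj (op X)) (Y : T) : (Y ⟶ X) →+ H.obj (op Y) where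
  toFun g := H.map g.op u
  map_zero' := by simp
  map_add' f g := by simp

variable {H}

lemma classHom_comp {X Y Y' : T} (u : H.obj (op X)) (f : Y' ⟶ Y) (g : Y ⟶ X) :
    classHom H u Y' (f ≫ g) = H.map f.op (classHom H u Y g) := by
  simp [classHom]

def RepresentsAt {X : T} (u : H.obj (op X)) (Y : T) : Prop :=
  Function.Bijective (classHom H u Y)

lemma RepresentsAt.of_iso {X Y Y' : T} {u : H.obj (op X)} (e : Y ≅ Y')
    (h : RepresentsAt u Y) : RepresentsAt u Y' := by
  have he : ⇑(classHom H u Y') = H.map e.inv.op ∘ classHom H u Y ∘ (e.homFromEquiv.symm) := by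
    funext g
    simp only [Function.comp_apply, Iso.homFromEquiv_symm_apply]
    rw [← classHom_comp, Iso.inv_hom_id_assoc]
  rw [RepresentsAt, he]
  exact ((ConcreteCategory.isIso_iff_bijective _).1 inferInstance).comp
    (h.comp e.homFromEquiv.symm.bijective)

theorem nonempty_iso_of_representsAt {X : T} (u : H.obj (op X)) (h : ∀ Y, RepresentsAt u Y) :
    Nonempty (preadditiveYoneda.obj X ≅ H) := by
  let α : preadditiveYoneda.obj X ⟶ H :=
    { app Y := AddCommGrpCat.ofHom (classHom H u Y.unop)
      naturality _ _ f := AddCommGrpCat.ext fun g => classHom_comp u f.unop g }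
  have : ∀ Y, IsIso (α.app Y) := fun Y => (ConcreteCategory.isIso_iff_bijective _).2 (h Y.unop)
  have := NatIso.isIso_of_isIso_app α
  exact ⟨asIso α⟩

end Representability

section Shift

variable {T : Type u} [Category.{v} T] [Preadditive T] [HasShift T ℤ]
  [∀ n : ℤ, (shiftFunctor T n).Additive]

lemma eq_zero_of_comp_shift_eq_zero {P X Y : T} {f : X ⟶ Y}
    (hf : ∀ g : P ⟶ X, g ≫ f = 0 → g = 0) (n : ℤ) (w : P⟦n⟧ ⟶ X⟦n⟧) (hw : w ≫ f⟦n⟧' = 0) :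
    w = 0 := by
  obtain ⟨g, rfl⟩ := (shiftFunctor T n).map_surjective w
  rw [← Functor.map_comp, ← (shiftFunctor T n).map_zero] at hw
  rw [hf g ((shiftFunctor T n).map_injective hw), Functor.map_zero]

end Shift

section Telescope

variable {T : Type u} [Category.{v} T] [HasCoproducts.{v} T]
  (Y : ℕ → T) (b : ∀ n, Y n ⟶ Y (n + 1))

noncomputable abbrev towerSigma : T := ∐ fun n : ULift.{v} ℕ => Y n.down

noncomputable def towerι (n : ℕ) : Y n ⟶ towerSigma Y :=
  Sigma.ι (fun n : ULift.{v} ℕ => Y n.down) ⟨n⟩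

noncomputable def towerShift : towerSigma Y ⟶ towerSigma Y :=
  Sigma.desc fun n => b n.down ≫ towerι Y (n.down + 1)

variable {Y b}

lemma towerSigma_hom_ext {W : T} {f g : towerSigma Y ⟶ W}
    (h : ∀ n, towerι Y n ≫ f = towerι Y n ≫ g) : f = g :=
  Sigma.hom_ext _ _ fun n => h n.down

@[simp]
lemma towerι_towerShift (n : ℕ) : towerι Y n ≫ towerShift Y b = b n ≫ towerι Y (n + 1) :=
  Sigma.ι_desc _ _

@[simp]
lemma towerι_towerShift_assoc (n : ℕ) {W : T} (f : towerSigma Y ⟶ W) :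
    towerι Y n ≫ towerShift Y b ≫ f = b n ≫ towerι Y (n + 1) ≫ f := by
  rw [← assoc, towerι_towerShift, assoc]

lemma map_towerShift {D : Type*} [Category.{v} D] [HasCoproducts.{v} D]
    (F : T ⥤ D) [PreservesColimitsOfSize.{v, v} F] :
    F.map (towerShift Y b) = (PreservesCoproduct.iso F _).hom ≫
      towerShift (fun n => F.obj (Y n)) (fun n => F.map (b n)) ≫
        (PreservesCoproduct.iso F _).inv := by
  rw [← Iso.inv_comp_eq, PreservesCoproduct.inv_hom, towerShift, sigmaComparison_map_desc]
  refine towerSigma_hom_ext (Y := fun n => F.obj (Y n)) fun n => ?_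
  simp [towerι, towerShift]

lemma exists_comp_towerι_comp_eq_of_le {W : T} {j : towerSigma Y ⟶ W}
    (hj : towerShift Y b ≫ j = j) {n N : ℕ} (hnN : n ≤ N) :
    ∃ c : Y n ⟶ Y N, c ≫ towerι Y N ≫ j = towerι Y n ≫ j := by
  induction N, hnN using Nat.le_induction with
  | base => exact ⟨𝟙 _, id_comp _⟩
  | succ N _ ih =>
    obtain ⟨c, hc⟩ := ih
    refine ⟨c ≫ b N, ?_⟩
    rw [assoc, ← towerι_towerShift_assoc, hj, hc]

end Telescope

section CompactTelescope

variable {T : Type u} [Category.{v} T] [Preadditive T] [HasCoproducts.{v} T]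
  {Y : ℕ → T} {b : ∀ n, Y n ⟶ Y (n + 1)}

lemma eq_zero_of_comp_one_sub_towerShift {P : T} (hP : IsCompactObj P) (t : P ⟶ towerSigma Y)
    (ht : t ≫ (𝟙 _ - towerShift Y b) = 0) : t = 0 := by
  classical
  -- In coordinates, `t ↦ t ≫ towerShift Y b` is the map `Φ` moving the component at `n` to
  -- `n + 1`; a family fixed by `Φ` vanishes, by induction from the bottom.
  let Φ : (Π₀ n : ULift.{v} ℕ, (P ⟶ Y n.down)) →+ (Π₀ n : ULift.{v} ℕ, (P ⟶ Y n.down)) :=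
    DFinsupp.sumAddHom fun n => (DFinsupp.singleAddHom (fun n : ULift.{v} ℕ => P ⟶ Y n.down)
      ⟨n.down + 1⟩).comp (Preadditive.rightComp P (b n.down))
  have hΦ : (sigmaHomSum P _).comp Φ =
      (Preadditive.rightComp P (towerShift Y b)).comp (sigmaHomSum P _) :=
    DFinsupp.addHom_ext fun n x => by simp [Φ, Preadditive.rightComp, towerShift, towerι]
  have hΦ₀ : (DFinsupp.evalAddMonoidHom ⟨0⟩).comp Φ = 0 :=
    DFinsupp.addHom_ext fun n x => by simp [Φ, DFinsupp.evalAddMonoidHom, DFinsupp.single_apply]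
  have hΦsucc : ∀ m : ℕ, (DFinsupp.evalAddMonoidHom ⟨m + 1⟩).comp Φ =
      (Preadditive.rightComp P (b m)).comp
        (DFinsupp.evalAddMonoidHom (β := fun n : ULift.{v} ℕ => P ⟶ Y n.down) ⟨m⟩) := fun m =>
    DFinsupp.addHom_ext fun ⟨n⟩ x => by
      rcases eq_or_ne n m with rfl | h
      · simp [Φ, DFinsupp.evalAddMonoidHom, Preadditive.rightComp]
      · simp [Φ, DFinsupp.evalAddMonoidHom, Preadditive.rightComp, DFinsupp.single_apply, h]
  obtain ⟨d, rfl⟩ := (hP _).2 t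
  have hd : Φ d = d := (hP _).1 <| show sigmaHomSum P _ (Φ d) = sigmaHomSum P _ d by
    rw [← AddMonoidHom.comp_apply, hΦ]
    rwa [Preadditive.comp_sub, comp_id, sub_eq_zero, eq_comm] at ht
  have hd₀ : ∀ m, d ⟨m⟩ = 0 := by
    intro m
    induction m with
    | zero => rw [← hd]; exact DFunLike.congr_fun hΦ₀ d
    | succ m ih =>
      rw [← hd]
      exact (DFunLike.congr_fun (hΦsucc m) d).trans
        (show d ⟨m⟩ ≫ b m = 0 by rw [ih, zero_comp])
  have : d = 0 := DFinsupp.ext fun m => hd₀ m.down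
  rw [this, map_zero]

lemma exists_comp_eq_of_towerShift_comp {P W : T} (hP : IsCompactObj P)
    {j : towerSigma Y ⟶ W} (hj : towerShift Y b ≫ j = j) (h : P ⟶ towerSigma Y) :
    ∃ (N : ℕ) (h' : P ⟶ Y N), h ≫ j = h' ≫ towerι Y N ≫ j := by
  classical
  obtain ⟨d, rfl⟩ := (hP _).2 h
  change ∃ N h', sigmaHomSum P _ d ≫ j = _
  induction d using DFinsupp.induction with
  | h0 => exact ⟨0, 0, by simp⟩
  | ha n x d _ _ ih =>
    obtain ⟨N, h', hh'⟩ := ih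
    obtain ⟨c₁, hc₁⟩ := exists_comp_towerι_comp_eq_of_le hj (le_max_left n.down N)
    obtain ⟨c₂, hc₂⟩ := exists_comp_towerι_comp_eq_of_le hj (le_max_right n.down N)
    refine ⟨max n.down N, x ≫ c₁ + h' ≫ c₂, ?_⟩
    simp only [map_add, Preadditive.add_comp, assoc, hc₁, hc₂, hh', sigmaHomSum_single]
    rfl

end CompactTelescope

section Characters

variable {T : Type u} [Category.{v} T] [Preadditive T]

noncomputable abbrev brownComenetzFunctor (Z : T) : Tᵒᵖ ⥤ AddCommGrpCat.{v} :=
  (preadditiveCoyoneda.obj (op Z)).op ⋙ preadditiveYoneda.obj QmodZ.{v}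

variable {Z : T}

noncomputable def toCharacter {Y : T}
    (χ : (brownComenetzFunctor Z).obj (op Y)) :
    (Z ⟶ Y) →+ ULift.{v} (AddCircle (1 : ℚ)) :=
  χ.hom

noncomputable def ofCharacter {Y : T} (φ : (Z ⟶ Y) →+ ULift.{v} (AddCircle (1 : ℚ))) :
    (brownComenetzFunctor Z).obj (op Y) :=
  AddCommGrpCat.ofHom φ

@[simp]
lemma toCharacter_ofCharacter {Y : T} (φ : (Z ⟶ Y) →+ ULift.{v} (AddCircle (1 : ℚ))) :
    toCharacter (ofCharacter φ) = φ :=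
  rfl

@[simp]
lemma toCharacter_map_apply {Y Y' : T} (f : Y ⟶ Y')
    (χ : (brownComenetzFunctor Z).obj (op Y'))
    (x : Z ⟶ Y) :
    toCharacter ((brownComenetzFunctor Z).map f.op χ) x =
      toCharacter χ (x ≫ f) :=
  rfl

lemma toCharacter_injective {Y : T} :
    Function.Injective (toCharacter (Z := Z) (Y := Y)) :=
  fun _ _ h => AddCommGrpCat.ext fun x => DFunLike.congr_fun h x

end Characters

section Pretriangulated

variable {T : Type u} [Category.{v} T] [HasZeroObject T] [Preadditive T] [HasShift T ℤ]
  [∀ n : ℤ, (shiftFunctor T n).Additive] [Pretriangulated T]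

lemma isIso_of_bijective_comp {G : T} (hG : IsTriangulatedGen G) {X Y : T} (f : X ⟶ Y)
    (hf : ∀ k : ℤ, Function.Bijective fun g : G⟦k⟧ ⟶ X => g ≫ f) : IsIso f := by
  obtain ⟨C, g', h', hT⟩ := distinguished_cocone_triangle f
  have h₁₂ : f ≫ g' = 0 := comp_distTriang_mor_zero₁₂ _ hT
  have h₃₁ : h' ≫ f⟦(1 : ℤ)⟧' = 0 := comp_distTriang_mor_zero₃₁ _ hT
  -- The cone `C` of `f` receives no nonzero map from any `G⟦k⟧`.
  refine (Triangle.isZero₃_iff_isIso₁ _ hT).1 (by_contra fun hC => ?_)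
  obtain ⟨k, c, hc⟩ := hG C hC
  let e : G⟦k⟧ ≅ (G⟦k - 1⟧)⟦(1 : ℤ)⟧ := (shiftFunctorAdd' T (k - 1) 1 k (by ring)).app G
  have hch : c ≫ h' = 0 := by
    have hinj : ∀ g : G⟦k - 1⟧ ⟶ X, g ≫ f = 0 → g = 0 := fun g hg =>
      (hf (k - 1)).1 (hg.trans zero_comp.symm)
    have h := eq_zero_of_comp_shift_eq_zero hinj 1 (e.inv ≫ c ≫ h') <| by
      rw [assoc, assoc, h₃₁, comp_zero, comp_zero]
    simpa using congrArg (e.hom ≫ ·) h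
  obtain ⟨d, rfl⟩ := Triangle.coyoneda_exact₃ _ hT c hch
  obtain ⟨d', rfl⟩ := (hf k).2 d
  exact hc (show (d' ≫ f) ≫ g' = 0 by rw [assoc, h₁₂, comp_zero])

lemma exact_map_op_of_distTriang {H : Tᵒᵖ ⥤ AddCommGrpCat.{v}} [H.Additive] {Tr : Triangle T}
    (hTr : Tr ∈ distTriang T)
    (h : ∀ x, H.map Tr.mor₁.op x = 0 → ∃ y, H.map Tr.mor₂.op y = x) :
    Function.Exact (H.map Tr.mor₂.op) (H.map Tr.mor₁.op) := by
  refine fun x => ⟨h x, ?_⟩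
  rintro ⟨y, rfl⟩
  exact (classHom_comp y Tr.mor₁ Tr.mor₂).symm.trans
    (by rw [comp_distTriang_mor_zero₁₂ _ hTr, map_zero])

end Pretriangulated

section Brown

variable {T : Type u} [Category.{v} T] [HasZeroObject T] [Preadditive T] [HasShift T ℤ]
  [∀ n : ℤ, (shiftFunctor T n).Additive] [Pretriangulated T] [HasCoproducts.{v} T]

structure IsBrownFunctor (H : Tᵒᵖ ⥤ AddCommGrpCat.{v}) : Prop where
  exact : ∀ Tr ∈ distTriang T, Function.Exact (H.map Tr.mor₂.op) (H.map Tr.mor₁.op)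
  exists_sigma : ∀ {ι : Type v} (X : ι → T) (α : ∀ i, H.obj (op (X i))),
    ∃ u : H.obj (op (∐ X)), ∀ i, H.map (Sigma.ι X i).op u = α i
  sigma_ext : ∀ {ι : Type v} (X : ι → T) (u : H.obj (op (∐ X))),
    (∀ i, H.map (Sigma.ι X i).op u = 0) → u = 0

theorem isBrownFunctor_preadditiveYoneda (Y : T) : IsBrownFunctor (preadditiveYoneda.obj Y) where
  exact Tr hTr := exact_map_op_of_distTriang hTr fun x hx =>
    (Triangle.yoneda_exact₂ Tr hTr x hx).imp fun _ h => h.symm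
  exists_sigma _ α := ⟨Sigma.desc α, fun i => Sigma.ι_desc α i⟩
  sigma_ext _ _ hu := Sigma.hom_ext _ _ fun i => (hu i).trans (comp_zero).symm

inductive IsBuiltFrom (G : T) : T → Prop
  | shift (k : ℤ) : IsBuiltFrom G (G⟦k⟧)
  | sigma {ι : Type v} (X : ι → T) : (∀ i, IsBuiltFrom G (X i)) → IsBuiltFrom G (∐ X)
  | cone (Tr : Triangle T) : Tr ∈ distTriang T → IsBuiltFrom G Tr.obj₁ →
      IsBuiltFrom G Tr.obj₂ → IsBuiltFrom G Tr.obj₃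

lemma exists_isBuiltFrom_surjective {H : Tᵒᵖ ⥤ AddCommGrpCat.{v}} {G : T} (hH : IsBrownFunctor H) :
    ∃ (X : T) (u : H.obj (op X)), IsBuiltFrom G X ∧
      ∀ (k : ℤ) (α : H.obj (op (G⟦k⟧))), ∃ g : G⟦k⟧ ⟶ X, H.map g.op u = α := by
  let F := fun p : Σ k : ℤ, H.obj (op (G⟦k⟧)) => G⟦p.1⟧
  obtain ⟨u, hu⟩ := hH.exists_sigma F (·.2)
  exact ⟨_, u, .sigma _ fun p => .shift p.1, fun k α => ⟨Sigma.ι F ⟨k, α⟩, hu ⟨k, α⟩⟩⟩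

variable {H : Tᵒᵖ ⥤ AddCommGrpCat.{v}} [H.Additive] {G : T}

lemma IsBrownFunctor.exact_shift_mor₁_mor₃ (hH : IsBrownFunctor H) {Tr : Triangle T}
    (hTr : Tr ∈ distTriang T) :
    Function.Exact (H.map (Tr.mor₁⟦(1 : ℤ)⟧').op) (H.map Tr.mor₃.op) := by
  have h := hH.exact _ (rot_of_distTriang _ (rot_of_distTriang _ hTr))
  change Function.Exact (H.map (-(Tr.mor₁⟦(1 : ℤ)⟧')).op) (H.map Tr.mor₃.op) at h
  rw [op_neg, H.map_neg] at h
  exact Function.Exact.of_neg_left h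

lemma RepresentsAt.sigma (hH : IsBrownFunctor H) {X : T} {u : H.obj (op X)} {ι : Type v}
    {Y : ι → T} (h : ∀ i, RepresentsAt u (Y i)) : RepresentsAt u (∐ Y) := by
  refine ⟨fun g₁ g₂ hg => Sigma.hom_ext _ _ fun i => (h i).1 ?_, fun α => ?_⟩
  · rw [classHom_comp, classHom_comp, hg]
  · choose g hg using fun i => (h i).2 (H.map (Sigma.ι Y i).op α)
    refine ⟨Sigma.desc g, sub_eq_zero.1 (hH.sigma_ext Y _ fun i => ?_)⟩
    rw [map_sub, ← classHom_comp, Sigma.ι_desc, hg, sub_self]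

lemma RepresentsAt.of_distTriang (hH : IsBrownFunctor H) {X : T} {u : H.obj (op X)}
    {Tr : Triangle T} (hTr : Tr ∈ distTriang T) (h₁ : RepresentsAt u Tr.obj₁)
    (h₂ : RepresentsAt u Tr.obj₂) (h₁' : RepresentsAt u (Tr.obj₁⟦(1 : ℤ)⟧))
    (h₂' : RepresentsAt u (Tr.obj₂⟦(1 : ℤ)⟧)) : RepresentsAt u Tr.obj₃ := by
  have hY := isBrownFunctor_preadditiveYoneda X
  have hrot := rot_of_distTriang _ hTr
  have comm : ∀ {A B : T} (f : A ⟶ B), (H.map f.op).hom.comp (classHom H u B) =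
      (classHom H u A).comp ((preadditiveYoneda.obj X).map f.op).hom := fun f =>
    AddMonoidHom.ext fun g => (classHom_comp u f g).symm
  exact AddMonoidHom.bijective_of_surjective_of_bijective_of_bijective_of_injective _ _ _ _
    _ _ _ _ _ _ _ _ _ (comm _) (comm _) (comm _) (comm _) (hY.exact_shift_mor₁_mor₃ hTr)
    (hY.exact _ hrot) (hY.exact _ hTr) (hH.exact_shift_mor₁_mor₃ hTr) (hH.exact _ hrot)
    (hH.exact _ hTr) h₂'.2 h₁' h₂ h₁.1

lemma towerShift_comp_eq_of_distTriang {Y : ℕ → T} {b : ∀ n, Y n ⟶ Y (n + 1)} {X : T}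
    {j : towerSigma Y ⟶ X} {δ : X ⟶ (towerSigma Y)⟦(1 : ℤ)⟧}
    (hT : Triangle.mk (𝟙 _ - towerShift Y b) j δ ∈ distTriang T) : towerShift Y b ≫ j = j := by
  have h : (𝟙 _ - towerShift Y b) ≫ j = 0 := comp_distTriang_mor_zero₁₂ _ hT
  rwa [Preadditive.sub_comp, id_comp, sub_eq_zero, eq_comm] at h

lemma exists_comp_eq_of_distTriang_towerShift {Y : ℕ → T} {b : ∀ n, Y n ⟶ Y (n + 1)} {P : T}
    (hP : IsCompactObj P) {X : T} {j : towerSigma Y ⟶ X} {δ : X ⟶ (towerSigma Y)⟦(1 : ℤ)⟧}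
    (hT : Triangle.mk (𝟙 _ - towerShift Y b) j δ ∈ distTriang T) (g : P ⟶ X) :
    ∃ (N : ℕ) (h : P ⟶ Y N), g = h ≫ towerι Y N ≫ j := by
  set e := PreservesCoproduct.iso (shiftFunctor T (1 : ℤ)) (fun n : ULift.{v} ℕ => Y n.down) with he
  -- After shifting, `𝟙 - towerShift` is still injective on maps out of the compact `P`.
  have hδ : g ≫ δ = 0 := by
    have hδs : δ ≫ e.hom ≫ (𝟙 _ - towerShift _ fun n => (b n)⟦(1 : ℤ)⟧') = 0 := by
      have h : δ ≫ (𝟙 _ - towerShift Y b)⟦(1 : ℤ)⟧' = 0 := comp_distTriang_mor_zero₃₁ _ hT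
      rw [Functor.map_sub, CategoryTheory.Functor.map_id, map_towerShift, ← he] at h
      simpa [Preadditive.comp_sub, Preadditive.sub_comp] using congrArg (· ≫ e.hom) h
    have h := eq_zero_of_comp_one_sub_towerShift (b := fun n => (b n)⟦(1 : ℤ)⟧') hP
      (g ≫ δ ≫ e.hom) (by rw [assoc, assoc, hδs, comp_zero])
    simpa using congrArg (· ≫ e.inv) h
  obtain ⟨f, rfl⟩ := Triangle.coyoneda_exact₃ _ hT g hδ
  exact exists_comp_eq_of_towerShift_comp hP (towerShift_comp_eq_of_distTriang hT) f

lemma exists_kill_kernel (hH : IsBrownFunctor H) (X : T) (u : H.obj (op X)) :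
    ∃ (X' : T) (u' : H.obj (op X')) (a : X ⟶ X'), (IsBuiltFrom G X → IsBuiltFrom G X') ∧
      H.map a.op u' = u ∧ ∀ (k : ℤ) (g : G⟦k⟧ ⟶ X), H.map g.op u = 0 → g ≫ a = 0 := by
  let K := Σ k : ℤ, {g : G⟦k⟧ ⟶ X // H.map g.op u = 0}
  let w : ∐ (fun q : K => G⟦q.1⟧) ⟶ X := Sigma.desc fun q => q.2.1
  obtain ⟨X', a, δ, hT⟩ := distinguished_cocone_triangle w
  have hιw : ∀ q, Sigma.ι _ q ≫ w = q.2.1 := fun q => Sigma.ι_desc _ q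
  have hw : H.map w.op u = 0 := hH.sigma_ext _ _ fun q =>
    (classHom_comp u _ w).symm.trans (by rw [hιw]; exact q.2.2)
  obtain ⟨u', hu'⟩ := (hH.exact _ hT u).1 hw
  refine ⟨X', u', a, fun hX => .cone _ hT (.sigma _ fun q => .shift q.1) hX, hu', fun k g hg => ?_⟩
  have hwa : w ≫ a = 0 := comp_distTriang_mor_zero₁₂ _ hT
  rw [← show Sigma.ι _ ⟨k, g, hg⟩ ≫ w = g from hιw _, assoc, hwa, comp_zero]

variable (H G) in
structure BrownTower where
  obj : ℕ → T
  cls : ∀ n, H.obj (op (obj n))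
  map : ∀ n, obj n ⟶ obj (n + 1)
  isBuiltFrom : ∀ n, IsBuiltFrom G (obj n)
  map_cls : ∀ n, H.map (map n).op (cls (n + 1)) = cls n
  surjective : ∀ (k : ℤ) (α : H.obj (op (G⟦k⟧))), ∃ g : G⟦k⟧ ⟶ obj 0, H.map g.op (cls 0) = α
  comp_map_eq_zero : ∀ n (k : ℤ) (g : G⟦k⟧ ⟶ obj n), H.map g.op (cls n) = 0 → g ≫ map n = 0

theorem BrownTower.nonempty (hH : IsBrownFunctor H) : Nonempty (BrownTower H G) := by
  obtain ⟨X₀, u₀, hX₀, hsurj⟩ := exists_isBuiltFrom_surjective (G := G) hH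
  choose X' u' a hbuilt hmap hkill using exists_kill_kernel (G := G) hH
  let tw : ℕ → Σ X : T, H.obj (op X) := fun n =>
    Nat.rec ⟨X₀, u₀⟩ (fun _ p => ⟨X' p.1 p.2, u' p.1 p.2⟩) n
  have hbuilt' : ∀ n, IsBuiltFrom G (tw n).1 := fun n => by
    induction n with
    | zero => exact hX₀
    | succ n ih => exact hbuilt _ _ ih
  exact ⟨{
    obj n := (tw n).1
    cls n := (tw n).2
    map n := a (tw n).1 (tw n).2
    isBuiltFrom := hbuilt'
    map_cls n := hmap _ _
    surjective := hsurj
    comp_map_eq_zero n := hkill _ _ }⟩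

lemma BrownTower.exists_cls (t : BrownTower H G) (hH : IsBrownFunctor H) {X : T}
    {j : towerSigma t.obj ⟶ X} {δ : X ⟶ (towerSigma t.obj)⟦(1 : ℤ)⟧}
    (hT : Triangle.mk (𝟙 _ - towerShift t.obj t.map) j δ ∈ distTriang T) :
    ∃ u : H.obj (op X), ∀ n, classHom H u _ (towerι t.obj n ≫ j) = t.cls n := by
  obtain ⟨v, hv⟩ := hH.exists_sigma _ fun n : ULift.{v} ℕ => t.cls n.down
  have hv' : ∀ n, classHom H v _ (towerι t.obj n) = t.cls n := fun n => hv ⟨n⟩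
  obtain ⟨(u : H.obj (op X)), (hu : H.map j.op u = v)⟩ := (hH.exact _ hT v).1 <|
    hH.sigma_ext _ _ fun n =>
    (classHom_comp v (towerι t.obj n.down) (𝟙 _ - towerShift t.obj t.map)).symm.trans <| by
      rw [Preadditive.comp_sub, comp_id, towerι_towerShift, map_sub, classHom_comp, hv', hv',
        t.map_cls, sub_self]
  exact ⟨u, fun n => by rw [classHom_comp]; exact (congrArg _ hu).trans (hv' n)⟩

theorem exists_representsAt_shift (hG : IsCompactObj G) (hH : IsBrownFunctor H) :
    ∃ (X : T) (u : H.obj (op X)), IsBuiltFrom G X ∧ ∀ k : ℤ, RepresentsAt u (G⟦k⟧) := by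
  obtain ⟨t⟩ := BrownTower.nonempty (G := G) hH
  obtain ⟨X, j, δ, hT⟩ := distinguished_cocone_triangle (𝟙 _ - towerShift t.obj t.map)
  obtain ⟨u, hu⟩ := t.exists_cls hH hT
  have hbuilt : IsBuiltFrom G (towerSigma t.obj) := .sigma _ fun n => t.isBuiltFrom n.down
  refine ⟨X, u, .cone _ hT hbuilt hbuilt, fun k => ⟨(injective_iff_map_eq_zero _).2 fun g hg => ?_,
    fun α => ?_⟩⟩
  · obtain ⟨N, h, rfl⟩ := exists_comp_eq_of_distTriang_towerShift (hG.shift k) hT g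
    have hh : h ≫ t.map N = 0 :=
      t.comp_map_eq_zero N k h (by rw [← hu, ← classHom_comp]; exact hg)
    rw [← towerShift_comp_eq_of_distTriang hT, towerι_towerShift_assoc, reassoc_of% hh, zero_comp]
  · obtain ⟨g, rfl⟩ := t.surjective k α
    exact ⟨g ≫ towerι t.obj 0 ≫ j, by rw [classHom_comp, hu]⟩

theorem IsBuiltFrom.representsAt_shift (hH : IsBrownFunctor H) {X : T} {u : H.obj (op X)}
    (hG : ∀ k : ℤ, RepresentsAt u (G⟦k⟧)) {Y : T} (hY : IsBuiltFrom G Y) (k : ℤ) :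
    RepresentsAt u (Y⟦k⟧) := by
  induction hY generalizing k with
  | shift k' => exact (hG (k' + k)).of_iso ((shiftFunctorAdd' T k' k (k' + k) rfl).app G)
  | sigma X _ ih =>
    exact (RepresentsAt.sigma hH fun i => ih i k).of_iso
      (PreservesCoproduct.iso (shiftFunctor T k) X).symm
  | cone Tr hTr _ _ ih₁ ih₂ =>
    exact RepresentsAt.of_distTriang hH (Triangle.shift_distinguished Tr hTr k) (ih₁ k) (ih₂ k)
      ((ih₁ (k + 1)).of_iso ((shiftFunctorAdd' T k 1 (k + 1) rfl).app _))
      ((ih₂ (k + 1)).of_iso ((shiftFunctorAdd' T k 1 (k + 1) rfl).app _))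

theorem exists_nonempty_iso_preadditiveYoneda (hG : IsCompactObj G) (hgen : IsTriangulatedGen G)
    (hH : IsBrownFunctor H) : ∃ X : T, Nonempty (preadditiveYoneda.obj X ≅ H) := by
  obtain ⟨X, u, -, hu⟩ := exists_representsAt_shift hG hH
  refine ⟨X, nonempty_iso_of_representsAt u fun Y => ?_⟩
  obtain ⟨Y', f, hY', hf⟩ :=
    exists_representsAt_shift (H := preadditiveYoneda.obj Y) hG (isBrownFunctor_preadditiveYoneda Y)
  have := isIso_of_bijective_comp hgen f hf
  exact (hY'.representsAt_shift hH hu 0).of_iso ((shiftFunctorZero T ℤ).app Y' ≪≫ asIso f)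

theorem isBrownFunctor_brownComenetz {Z : T} (hZ : IsCompactObj Z) :
    IsBrownFunctor (brownComenetzFunctor Z) where
  exact Tr hTr := exact_map_op_of_distTriang hTr fun χ hχ => by
    have hexact : Function.Exact (Preadditive.rightComp Z Tr.mor₁)
        (Preadditive.rightComp Z Tr.mor₂) := fun x =>
      ⟨fun hx => (Triangle.coyoneda_exact₂ Tr hTr x hx).imp fun _ h => h.symm,
        by rintro ⟨y, rfl⟩; exact (assoc _ _ _).trans (by simp [comp_distTriang_mor_zero₁₂ _ hTr])⟩
    obtain ⟨φ, hφ⟩ := AddMonoidHom.exists_comp_eq_of_exact hexact (toCharacter χ)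
      (AddMonoidHom.ext fun x => (toCharacter_map_apply _ χ x).symm.trans (by rw [hχ]; rfl))
    exact ⟨ofCharacter φ, toCharacter_injective (AddMonoidHom.ext fun x => DFunLike.congr_fun hφ x)⟩
  exists_sigma X α := by
    classical
    refine ⟨ofCharacter ((DFinsupp.sumAddHom fun i => toCharacter (α i)).comp
      (hZ.sigmaHomEquiv X).symm.toAddMonoidHom), fun i => toCharacter_injective ?_⟩
    ext x
    rw [toCharacter_map_apply, toCharacter_ofCharacter]
    simp
  sigma_ext X χ hχ := by
    classical
    refine toCharacter_injective (AddMonoidHom.ext fun t => ?_)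
    obtain ⟨d, rfl⟩ := (hZ X).2 t
    have hzero : (toCharacter χ).comp (sigmaHomSum Z X) = 0 := DFinsupp.addHom_ext fun i x => by
      rw [AddMonoidHom.comp_apply, sigmaHomSum_single, ← toCharacter_map_apply, hχ i]
      rfl
    exact DFunLike.congr_fun hzero d

end Brown

end PaperStmt

theorem statement3 (T : Type u) [Category.{v} T]
    [HasZeroObject T] [Preadditive T] [HasShift T ℤ]
    [∀ n : ℤ, (shiftFunctor T n).Additive] [Pretriangulated T]
    [HasCoproducts.{v} T]
    (hgen : ∃ G : T, IsCompactObj G ∧ IsTriangulatedGen G)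
    (Z : T) (hZ : IsCompactObj Z) :
    ∃ Zd : T, Nonempty
      ((preadditiveYoneda.obj Zd) ≅
        (preadditiveCoyoneda.obj (Opposite.op Z)).op ⋙ preadditiveYoneda.obj QmodZ.{v}) := by
  obtain ⟨G, hG, hGgen⟩ := hgen
  exact exists_nonempty_iso_preadditiveYoneda hG hGgen (isBrownFunctor_brownComenetz hZ)
end

section
/- Let A be an abelian category, X a resolving subcategory of A, and n ≥ 0. Then the class X_n of all objects of A of X-resolution dimension at most n is itself a resolving subcategory of A. -/
/-!
Write `HasSyzygyIn P Q M` when there is a short exact sequence `K ↪ X ↠ M` with `X ∈ P` and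
`K ∈ Q`. Cutting a resolution at its first syzygy, and splicing short exact sequences back
together, shows that the objects of `P`-resolution dimension at most `n + 1` are exactly those
with a syzygy of dimension at most `n`. So it suffices that `HasSyzygyIn P Q` is resolving
whenever `P ⊆ Q` are. The key point is a Schanuel-type argument: comparing two sequences
through the pullback of their epimorphisms shows that then every `K ↪ X ↠ M` with `X ∈ Q` has
`K ∈ Q`. Two-out-of-three follows by pulling back along a `P`-epimorphism onto the middle term,
and closure under retracts by realising a `P`-cover of a retract of `N` as a retract, in the
arrow category, of a `P`-cover of `N`.
-/

universe v u

open CategoryTheory Category Limits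

namespace PaperStmt

variable {A : Type u} [Category.{v} A] [Abelian A]

/-- A class of objects of an abelian category is resolving if it is closed under retracts,
satisfies the two-out-of-three property for short exact sequences with third term in the
class, and is generating. -/
structure IsResolving (P : A → Prop) : Prop where
  retract : ∀ ⦃M N : A⦄, (∃ (s : M ⟶ N) (r : N ⟶ M), s ≫ r = 𝟙 M) → P N → P M
  twoOfThree : ∀ (S : ShortComplex A), S.ShortExact → P S.X₃ → (P S.X₁ ↔ P S.X₂)
  generating : ∀ M : A, ∃ (X : A) (p : X ⟶ M), P X ∧ Epi p

/-- `M` has `P`-resolution dimension at most `n`: there is an exact sequence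
`0 → X_n → ⋯ → X_1 → X_0 → M → 0` with all `X_i` in `P`. -/
def ResDimLE (P : A → Prop) (n : ℕ) (M : A) : Prop :=
  ∃ S : ComposableArrows A (n + 3),
    S.Exact ∧ IsZero (S.obj 0) ∧ IsZero (S.obj (Fin.last (n + 3))) ∧
    (∀ (i : ℕ) (_ : 1 ≤ i) (_ : i ≤ n + 1), P (S.obj ⟨i, by omega⟩)) ∧
    Nonempty (S.obj ⟨n + 2, by omega⟩ ≅ M)

end PaperStmt

open PaperStmt

open ZeroObject

namespace PaperStmt

variable {A : Type u} [Category.{v} A] [Abelian A] {P Q : A → Prop}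

lemma shortExact_kernel {X M : A} (g : X ⟶ M) [Epi g] :
    (ShortComplex.mk _ _ (kernel.condition g)).ShortExact :=
  { exact := ShortComplex.exact_kernel g }

lemma shortExact_cokernel {K X : A} (f : K ⟶ X) [Mono f] :
    (ShortComplex.mk _ _ (cokernel.condition f)).ShortExact :=
  { exact := ShortComplex.exact_cokernel f }

lemma shortExact_of_isPullback {S : ShortComplex A} (hS : S.ShortExact) {W Y : A}
    {fst : W ⟶ S.X₂} {snd : W ⟶ Y} {f : Y ⟶ S.X₃} (h : IsPullback fst snd S.g f) :
    (ShortComplex.mk (h.lift S.f 0 (by simp)) snd (h.lift_snd _ _ _)).ShortExact := by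
  have := hS.mono_f
  have := hS.epi_g
  have : Mono (h.lift S.f 0 (by simp) ≫ fst) := by rwa [h.lift_fst]
  have : Mono (h.lift S.f 0 (by simp)) := mono_of_mono _ fst
  have : Epi snd := Abelian.epi_snd_of_isLimit _ _ h.isLimit
  refine .mk' (ShortComplex.exact_of_f_is_kernel _ ?_) inferInstance inferInstance
  refine KernelFork.IsLimit.ofι' _ _ fun {T} t ht => ?_
  have hg : (t ≫ fst) ≫ S.g = 0 := by rw [assoc, h.w, reassoc_of% ht, zero_comp]
  refine ⟨hS.exact.lift (t ≫ fst) hg, h.hom_ext ?_ ?_⟩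
  · simp
  · simpa using ht.symm

lemma shortExact_of_isPullback_of_epi {S : ShortComplex A} (hS : S.ShortExact) {W X : A}
    {fst : W ⟶ X} {snd : W ⟶ S.X₁} {p : X ⟶ S.X₂} [Epi p] (h : IsPullback fst snd p S.f) :
    (ShortComplex.mk fst (p ≫ S.g) (by rw [h.w_assoc, S.zero, comp_zero])).ShortExact := by
  have := hS.mono_f
  have := hS.epi_g
  have : Mono fst := PullbackCone.mono_fst_of_is_pullback_of_mono h.isLimit
  refine .mk' (ShortComplex.exact_of_f_is_kernel _ ?_) inferInstance (epi_comp _ _)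
  refine KernelFork.IsLimit.ofι' _ _ fun {T} t ht => ?_
  exact ⟨h.lift t (hS.exact.lift (t ≫ p) (by simpa using ht)) (by simp), h.lift_fst _ _ _⟩

lemma IsResolving.of_retract (hP : IsResolving P) {M N : A} (h : Retract M N) (hN : P N) :
    P M :=
  hP.retract ⟨h.i, h.r, h.retract⟩ hN

lemma IsResolving.of_isZero (hP : IsResolving P) {M : A} (hM : IsZero M) : P M := by
  obtain ⟨X, p, hX, -⟩ := hP.generating M
  exact hP.retract ⟨0, 0, hM.eq_of_src _ _⟩ hX

lemma IsResolving.biprod (hP : IsResolving P) {X Y : A} (hX : P X) (hY : P Y) :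
    P (X ⊞ Y) :=
  (hP.twoOfThree _ (ShortComplex.Splitting.ofHasBinaryBiproduct X Y).shortExact hY).1 hX

def HasSyzygyIn (P Q : A → Prop) (M : A) : Prop :=
  ∃ (K X : A) (f : K ⟶ X) (g : X ⟶ M) (w : f ≫ g = 0),
    (ShortComplex.mk f g w).ShortExact ∧ P X ∧ Q K

lemma hasSyzygyIn_of_mem (hP : IsResolving P) (hPQ : ∀ M, P M → Q M) {M : A} (hM : P M) :
    HasSyzygyIn P Q M :=
  ⟨_, _, _, _, _, shortExact_kernel (𝟙 M), hM, hPQ _ (hP.of_isZero (isZero_kernel_of_mono _))⟩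

lemma HasSyzygyIn.mem_of_shortExact (hQ : IsResolving Q) (hPQ : ∀ M, P M → Q M) {M : A}
    (hM : HasSyzygyIn P Q M) {K X : A} {f : K ⟶ X} {g : X ⟶ M} {w : f ≫ g = 0}
    (hS : (ShortComplex.mk f g w).ShortExact) (hX : Q X) : Q K := by
  obtain ⟨K₀, X₀, f₀, g₀, w₀, hS₀, hX₀, hK₀⟩ := hM
  have sq := IsPullback.of_hasPullback g₀ g
  have hY : Q (pullback g₀ g) := (hQ.twoOfThree _ (shortExact_of_isPullback hS₀ sq) hX).1 hK₀
  exact (hQ.twoOfThree _ (shortExact_of_isPullback hS sq.flip) (hPQ _ hX₀)).2 hY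

lemma hasSyzygyIn_of_shortExact (hP : IsResolving P) (hQ : IsResolving Q)
    (hPQ : ∀ M, P M → Q M) {K Y M : A} {f : K ⟶ Y} {g : Y ⟶ M} {w : f ≫ g = 0}
    (hS : (ShortComplex.mk f g w).ShortExact) (hK : Q K) (hY : Q Y) : HasSyzygyIn P Q M := by
  obtain ⟨X, t, hX, ht⟩ := hP.generating Y
  have hkt := shortExact_kernel t
  have hL : Q (kernel t) := (hQ.twoOfThree _ hkt hY).2 (hPQ _ hX)
  have sq := IsPullback.of_hasPullback t f
  have hZ : Q (pullback t f) := (hQ.twoOfThree _ (shortExact_of_isPullback hkt sq) hK).1 hL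
  exact ⟨_, _, _, _, _, shortExact_of_isPullback_of_epi hS sq, hX, hZ⟩

lemma HasSyzygyIn.twoOfThree (hP : IsResolving P) (hQ : IsResolving Q) (hPQ : ∀ M, P M → Q M)
    (S : ShortComplex A) (hS : S.ShortExact) (h₃ : HasSyzygyIn P Q S.X₃) :
    HasSyzygyIn P Q S.X₁ ↔ HasSyzygyIn P Q S.X₂ := by
  obtain ⟨X, p, hX, hp⟩ := hP.generating S.X₂
  have hkp := shortExact_kernel p
  have sq := IsPullback.of_hasPullback p S.f
  have hZ : Q (pullback p S.f) :=
    h₃.mem_of_shortExact hQ hPQ (shortExact_of_isPullback_of_epi hS sq) (hPQ _ hX)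
  have hkZ := shortExact_of_isPullback hkp sq
  constructor
  · intro h₁
    exact ⟨_, _, _, _, _, hkp, hX, h₁.mem_of_shortExact hQ hPQ hkZ hZ⟩
  · intro h₂
    exact hasSyzygyIn_of_shortExact hP hQ hPQ hkZ (h₂.mem_of_shortExact hQ hPQ hkp (hPQ _ hX)) hZ

lemma HasSyzygyIn.of_retract (hP : IsResolving P) (hQ : IsResolving Q) (hPQ : ∀ M, P M → Q M)
    {M N : A} (h : Retract M N) (hN : HasSyzygyIn P Q N) : HasSyzygyIn P Q M := by
  obtain ⟨X, t, hX, ht⟩ := hP.generating N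
  let w : X ⊞ X ⟶ N := biprod.desc (t ≫ h.r ≫ h.i) t
  have : Epi w := epi_of_epi_fac (biprod.inr_desc _ _)
  let hw : RetractArrow (t ≫ h.r) w :=
    { i := Arrow.homMk biprod.inl h.i
      r := Arrow.homMk (biprod.desc (𝟙 X) (𝟙 X)) h.r
        (biprod.hom_ext' _ _ (by simp [w]) (by simp [w]))
      retract := by ext <;> simp }
  have hkw : Q (kernel w) :=
    hN.mem_of_shortExact hQ hPQ (shortExact_kernel w) (hPQ _ (hP.biprod hX hX))
  exact ⟨_, _, _, _, _, shortExact_kernel (t ≫ h.r), hX,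
    hQ.of_retract (Retract.map hw (ker A)) hkw⟩

lemma isResolving_hasSyzygyIn (hP : IsResolving P) (hQ : IsResolving Q)
    (hPQ : ∀ M, P M → Q M) : IsResolving (HasSyzygyIn P Q) where
  retract _ _ := fun ⟨s, r, hsr⟩ => HasSyzygyIn.of_retract hP hQ hPQ ⟨s, r, hsr⟩
  twoOfThree := HasSyzygyIn.twoOfThree hP hQ hPQ
  generating M :=
    let ⟨X, p, hX, hp⟩ := hP.generating M
    ⟨X, p, hasSyzygyIn_of_mem hP hPQ hX, hp⟩

def ResDimLERec (P : A → Prop) : ℕ → A → Prop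
  | 0 => P
  | n + 1 => HasSyzygyIn P (ResDimLERec P n)

lemma resDimLERec_of_mem (hP : IsResolving P) :
    ∀ (n : ℕ) {M : A}, P M → ResDimLERec P n M
  | 0, _, hM => hM
  | n + 1, _, hM => hasSyzygyIn_of_mem hP (fun _ => resDimLERec_of_mem hP n) hM

lemma isResolving_resDimLERec (hP : IsResolving P) :
    ∀ n : ℕ, IsResolving (ResDimLERec P n)
  | 0 => hP
  | n + 1 => isResolving_hasSyzygyIn hP (isResolving_resDimLERec hP n)
      (fun _ => resDimLERec_of_mem hP n)

-- `S` is an exact sequence `0 → C → X_{k-1} → ⋯ → X_0 → M → 0` with all `X_i ∈ P`, the leading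
-- `0` being encoded by `Mono`.
def IsSyzygy (P : A → Prop) (k : ℕ) (C M : A) : Prop :=
  ∃ S : ComposableArrows A (k + 2),
    S.Exact ∧ Mono (S.map' 0 1) ∧ IsZero (S.obj (Fin.last (k + 2))) ∧ S.obj' 0 = C ∧
    (∀ (i : ℕ) (_ : 1 ≤ i) (_ : i ≤ k), P (S.obj ⟨i, by omega⟩)) ∧
    Nonempty (S.obj ⟨k + 1, by omega⟩ ≅ M)

lemma _root_.CategoryTheory.ComposableArrows.Exact.precomp {n : ℕ}
    {F : ComposableArrows A (n + 1)} (hF : F.Exact) {X : A} (f : X ⟶ F.left)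
    (w : f ≫ F.map' 0 1 (by omega) (by omega) = 0) (h : (ShortComplex.mk _ _ w).Exact) :
    (F.precomp f).Exact :=
  ComposableArrows.exact_of_δ₀ (ComposableArrows.exact₂_mk _ w h) hF

lemma isSyzygy_zero_iff {C M : A} : IsSyzygy P 0 C M ↔ Nonempty (C ≅ M) := by
  constructor
  · rintro ⟨S, hS, hf, hz, rfl, -, ⟨e⟩⟩
    let f := S.map' 0 1
    have : Epi f := (hS.exact 0).epi_f (hz.eq_of_tgt _ _)
    have : IsIso f := isIso_of_mono_of_epi _
    exact ⟨asIso f ≪≫ e⟩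
  · rintro ⟨e⟩
    refine ⟨(ComposableArrows.mk₁ (0 : M ⟶ 0)).precomp e.hom, ?_, inferInstanceAs (Mono e.hom),
      isZero_zero A, rfl, fun i _ _ => by omega, ⟨Iso.refl M⟩⟩
    exact (ComposableArrows.exact₁ _).precomp _ comp_zero
      ((ShortComplex.exact_iff_epi _ rfl).2 (inferInstanceAs (Epi e.hom)))

lemma IsSyzygy.exists_shortExact {k : ℕ} {C M : A} (h : IsSyzygy P (k + 1) C M) :
    ∃ (X C' : A) (f : C ⟶ X) (g : X ⟶ C') (w : f ≫ g = 0),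
      (ShortComplex.mk f g w).ShortExact ∧ P X ∧ IsSyzygy P k C' M := by
  obtain ⟨S, hS, hf, hz, rfl, hX, hM⟩ := h
  let f := S.map' 0 1
  let u := cokernel.desc f (S.map' 1 2) (hS.toIsComplex.zero 0)
  have hu : Mono u := (ShortComplex.exact_iff_mono_cokernel_desc _).1 (hS.exact 0)
  have hu₂ : u ≫ S.map' 2 3 = 0 := by
    rw [← cancel_epi (cokernel.π _), cokernel.π_desc_assoc, comp_zero]
    exact hS.toIsComplex.zero 1
  have hexact : (ShortComplex.mk u (S.map' 2 3) hu₂).Exact :=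
    (ShortComplex.exact_iff_of_epi_of_isIso_of_mono (S₁ := S.sc hS.toIsComplex 1)
      (S₂ := ShortComplex.mk u (S.map' 2 3) hu₂)
      { τ₁ := cokernel.π _, τ₂ := 𝟙 _, τ₃ := 𝟙 _
        comm₁₂ := by rw [comp_id]; exact cokernel.π_desc _ _ _ }).1 (hS.exact 1)
  refine ⟨_, _, _, _, _, shortExact_cokernel f, hX 1 le_rfl (by omega),
    S.δ₀.δ₀.precomp u, hS.δ₀.δ₀.precomp u hu₂ hexact, hu, hz, rfl, ?_, hM⟩
  rintro (_ | i) _ _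
  · omega
  · exact hX (i + 2) (by omega) (by omega)

lemma IsSyzygy.of_shortExact {k : ℕ} {C X C' M : A} {f : C ⟶ X} {g : X ⟶ C'} {w : f ≫ g = 0}
    (hS : (ShortComplex.mk f g w).ShortExact) (hX : P X) (h : IsSyzygy P k C' M) :
    IsSyzygy P (k + 1) C M := by
  obtain ⟨S, hS', hm, hz, rfl, hP', hM⟩ := h
  let m := S.map' 0 1
  have : Mono m := hm
  have : Epi g := hS.epi_g
  have w₁ : (g ≫ m) ≫ S.map' 1 2 = 0 := by rw [assoc, hS'.toIsComplex.zero 0, comp_zero]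
  have h₁ : (ShortComplex.mk _ _ w₁).Exact :=
    (ShortComplex.exact_iff_of_epi_of_isIso_of_mono (S₁ := ShortComplex.mk _ _ w₁)
      (S₂ := S.sc hS'.toIsComplex 0) { τ₁ := g, τ₂ := 𝟙 _, τ₃ := 𝟙 _ }).2 (hS'.exact 0)
  have w₂ : f ≫ g ≫ m = 0 := by rw [reassoc_of% w, zero_comp]
  have h₂ : (ShortComplex.mk _ _ w₂).Exact :=
    (ShortComplex.exact_iff_of_epi_of_isIso_of_mono (S₁ := ShortComplex.mk f g w)
      (S₂ := ShortComplex.mk _ _ w₂) { τ₁ := 𝟙 _, τ₂ := 𝟙 _, τ₃ := m }).1 hS.exact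
  refine ⟨(S.δ₀.precomp (g ≫ m)).precomp f, (hS'.δ₀.precomp _ w₁ h₁).precomp f w₂ h₂,
    hS.mono_f, hz, rfl, ?_, hM⟩
  rintro (_ | _ | i) _ _
  · omega
  · exact hX
  · exact hP' (i + 1) (by omega) (by omega)

lemma resDimLERec_add_iff (hP : IsResolving P) :
    ∀ (k m : ℕ) {M : A}, ResDimLERec P (k + m) M ↔ ∃ C, ResDimLERec P m C ∧ IsSyzygy P k C M
  | 0, m, M => by
    simp only [zero_add, isSyzygy_zero_iff]
    refine ⟨fun hM => ⟨M, hM, ⟨Iso.refl M⟩⟩, fun ⟨C, hC, ⟨e⟩⟩ => ?_⟩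
    exact (isResolving_resDimLERec hP m).of_retract e.symm.retract hC
  | k + 1, m, M => by
    rw [show k + 1 + m = k + (m + 1) by omega, resDimLERec_add_iff hP k (m + 1)]
    constructor
    · rintro ⟨C', ⟨C, X, f, g, w, hS, hX, hC⟩, hC'⟩
      exact ⟨C, hC, .of_shortExact hS hX hC'⟩
    · rintro ⟨C, hC, h⟩
      obtain ⟨X, C', f, g, w, hS, hX, hC'⟩ := h.exists_shortExact
      exact ⟨C', ⟨C, X, f, g, w, hS, hX, hC⟩, hC'⟩

lemma resDimLE_iff_exists_isSyzygy (n : ℕ) (M : A) :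
    ResDimLE P n M ↔ ∃ C, P C ∧ IsSyzygy P n C M := by
  constructor
  · rintro ⟨S, hS, h₀, hz, hX, hM⟩
    refine ⟨_, hX 1 le_rfl (by omega), S.δ₀, hS.δ₀, ?_, hz, rfl,
      fun i _ _ => hX (i + 1) (by omega) (by omega), hM⟩
    exact (hS.exact 0).mono_g (h₀.eq_of_src _ _)
  · rintro ⟨C, hC, S, hS, hf, hz, rfl, hX, hM⟩
    refine ⟨S.precomp 0, hS.precomp 0 zero_comp ((ShortComplex.exact_iff_mono _ rfl).2 hf),
      isZero_zero A, hz, ?_, hM⟩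
    rintro (_ | _ | i) _ _
    · omega
    · exact hC
    · exact hX (i + 1) (by omega) (by omega)

lemma resDimLE_iff_resDimLERec (hP : IsResolving P) (n : ℕ) (M : A) :
    ResDimLE P n M ↔ ResDimLERec P n M :=
  (resDimLE_iff_exists_isSyzygy n M).trans (resDimLERec_add_iff hP n 0).symm

end PaperStmt

theorem statement8 (A : Type u) [Category.{v} A] [Abelian A]
    (P : A → Prop) (hP : IsResolving P) (n : ℕ) :
    IsResolving (fun M : A => ResDimLE P n M) := by
  simpa only [resDimLE_iff_resDimLERec hP] using isResolving_resDimLERec hP n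
end
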